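/- arXiv:1910.00359 — 5 statements merged into one kernel-verified Lean document; each statement's English description precedes it below -/
import Mathlib

section
/- Let L ≥ 1 and fix layer widths n_0 = m, n_1, …, n_L = n, and let s = min_{0 ≤ i ≤ L} n_i be the minimum layer width. Then the family of L-layer multilayer perceptrons with ReLU activations and these layer widths has rank-s affine expression: for every affine function G : ℝ^m → ℝ^n of the form G(x) = A x + b with rank(A) = s, and every finite subset Ω ⊂ ℝ^m, there exists a parameter vector φ such that F_φ(x) = G(x) for all x ∈ Ω. -/
open Matrix

/-- Post-activation values of a ReLU MLP with layer widths `n 0, n 1, …`: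
`act n A b x k` is the vector fed as input to layer `k+1`
(`act 0 = x`, and `act (k+1) = ReLU(A_k ⬝ act k + b_k)` componentwise). -/
noncomputable def act (n : ℕ → ℕ)
    (A : ∀ i : ℕ, Matrix (Fin (n (i + 1))) (Fin (n i)) ℝ)
    (b : ∀ i : ℕ, Fin (n (i + 1)) → ℝ)
    (x : Fin (n 0) → ℝ) : (k : ℕ) → Fin (n k) → ℝ
  | 0 => x
  | k + 1 => fun j => max ((A k).mulVec (act n A b x k) j + b k j) 0

/-- The `k`-th preactivation vector `H_{k+1}(act k) = A_k ⬝ act k + b_k`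
(the input of the `(k+1)`-st ReLU when `k + 1` is not the last layer). -/
noncomputable def preact (n : ℕ → ℕ)
    (A : ∀ i : ℕ, Matrix (Fin (n (i + 1))) (Fin (n i)) ℝ)
    (b : ∀ i : ℕ, Fin (n (i + 1)) → ℝ)
    (x : Fin (n 0) → ℝ) (k : ℕ) : Fin (n (k + 1)) → ℝ :=
  fun j => (A k).mulVec (act n A b x k) j + b k j

/-- Output of the `(K+1)`-layer ReLU MLP
`F_φ(x) = H_{K+1}(f(H_K(⋯f(H_1(x))⋯)))` (no ReLU after the last affine layer). -/
noncomputable def mlp (n : ℕ → ℕ)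
    (A : ∀ i : ℕ, Matrix (Fin (n (i + 1))) (Fin (n i)) ℝ)
    (b : ∀ i : ℕ, Fin (n (i + 1)) → ℝ)
    (K : ℕ) (x : Fin (n 0) → ℝ) : Fin (n (K + 1)) → ℝ :=
  preact n A b x K

/-!
Factor `A = B * C` through `ℝ^s`. Every hidden layer is at least `s` wide, so it can carry the
vector `C x + t • 1` padded with zeros; since `Ω` is finite, the shift `t` can be chosen to make
this vector nonnegative on `Ω`, and then every ReLU acts as the identity. The last layer applies
`B` and subtracts `B (t • 1)`.
-/

theorem Matrix.exists_mul_eq_of_rank_eq {K ι κ : Type*} [Field K] [Fintype κ] [DecidableEq κ]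
    {s : ℕ} (A : Matrix ι κ K) (h : A.rank = s) :
    ∃ (B : Matrix ι (Fin s) K) (C : Matrix (Fin s) κ K), A = B * C := by
  let e : LinearMap.range A.mulVecLin ≃ₗ[K] (Fin s → K) :=
    LinearEquiv.ofFinrankEq _ _ (by rw [Module.finrank_fin_fun]; exact h)
  refine ⟨LinearMap.toMatrix' ((LinearMap.range A.mulVecLin).subtype ∘ₗ e.symm.toLinearMap),
    LinearMap.toMatrix' (e.toLinearMap ∘ₗ A.mulVecLin.rangeRestrict), ?_⟩
  rw [← LinearMap.toMatrix'_comp, LinearMap.comp_assoc, ← LinearMap.comp_assoc _ e.toLinearMap,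
    LinearEquiv.symm_comp, LinearMap.id_comp]
  exact (LinearMap.toMatrix'_toLin' A).symm

theorem Finset.exists_add_nonneg {α ι : Type*} [Finite ι] (Ω : Finset α)
    (f : α → ι → ℝ) :
    ∃ t : ℝ, ∀ x ∈ Ω, ∀ i, 0 ≤ f x i + t := by
  obtain ⟨T, hT⟩ := ((Ω.finite_toSet.prod Set.finite_univ).image
    fun p : α × ι => f p.1 p.2).bddBelow
  exact ⟨-T, fun x hx i => by linarith [hT ⟨(x, i), ⟨hx, trivial⟩, rfl⟩]⟩

def padMatrix {s N : ℕ} (h : s ≤ N) : Matrix (Fin N) (Fin s) ℝ :=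
  (1 : Matrix (Fin N) (Fin N) ℝ).submatrix id (Fin.castLE h)

theorem padMatrix_transpose_mul_self {s N : ℕ} (h : s ≤ N) :
    (padMatrix h)ᵀ * padMatrix h = 1 := by
  rw [padMatrix, transpose_submatrix, transpose_one,
    ← submatrix_mul _ _ _ _ _ Function.bijective_id, Matrix.mul_one,
    submatrix_one _ (Fin.castLE_injective h)]

theorem padMatrix_mulVec_nonneg {s N : ℕ} (h : s ≤ N) {v : Fin s → ℝ} (hv : 0 ≤ v) :
    0 ≤ padMatrix h *ᵥ v := by
  intro i
  simp only [Pi.zero_apply, mulVec, dotProduct]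
  refine Finset.sum_nonneg fun j _ => mul_nonneg ?_ (hv j)
  simp only [padMatrix, submatrix_apply, id, one_apply]
  split_ifs <;> norm_num

section Layers

variable {n : ℕ → ℕ} {W : ∀ i : ℕ, Matrix (Fin (n (i + 1))) (Fin (n i)) ℝ}
  {c : ∀ i : ℕ, Fin (n (i + 1)) → ℝ} {x : Fin (n 0) → ℝ}

theorem act_succ_of_preact_nonneg {k : ℕ} (h : 0 ≤ preact n W c x k) :
    act n W c x (k + 1) = preact n W c x k :=
  funext fun j => max_eq_left (h j)

theorem act_update_of_le {j k : ℕ} (M : Matrix (Fin (n (j + 1))) (Fin (n j)) ℝ)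
    (d : Fin (n (j + 1)) → ℝ) (hk : k ≤ j) :
    act n (Function.update W j M) (Function.update c j d) x k = act n W c x k := by
  induction k with
  | zero => rfl
  | succ k ih =>
    have hkj : k ≠ j := by omega
    simp only [act, Function.update_of_ne hkj, ih (by omega)]

theorem mlp_update_succ (K : ℕ) (M : Matrix (Fin (n (K + 2))) (Fin (n (K + 1))) ℝ)
    (d : Fin (n (K + 2)) → ℝ) :
    mlp n (Function.update W (K + 1) M) (Function.update c (K + 1) d) (K + 1) x
      = M *ᵥ act n W c x (K + 1) + d := by
  funext j
  simp only [mlp, preact, Function.update_self, act_update_of_le M d le_rfl, Pi.add_apply]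

end Layers

theorem exists_mlp_eq_mul_mulVec_add_on (n : ℕ → ℕ) (Ω : Finset (Fin (n 0) → ℝ))
    {s : ℕ} (K : ℕ) (hs : ∀ i, 0 < i → i ≤ K → s ≤ n i)
    (B : Matrix (Fin (n (K + 1))) (Fin s) ℝ) (C : Matrix (Fin s) (Fin (n 0)) ℝ)
    (d : Fin (n (K + 1)) → ℝ) :
    ∃ (W : ∀ i : ℕ, Matrix (Fin (n (i + 1))) (Fin (n i)) ℝ)
      (c : ∀ i : ℕ, Fin (n (i + 1)) → ℝ),
      ∀ x ∈ Ω, mlp n W c K x = (B * C) *ᵥ x + d := by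
  induction K with
  | zero => exact ⟨Pi.single 0 (B * C), Pi.single 0 d, fun x _ => rfl⟩
  | succ K ih =>
    have hsK : s ≤ n (K + 1) := hs (K + 1) K.succ_pos le_rfl
    set E := padMatrix hsK
    obtain ⟨t, ht⟩ := Ω.exists_add_nonneg (C *ᵥ ·)
    set T : Fin s → ℝ := fun _ => t
    obtain ⟨W, c, hWc⟩ := ih (fun i hi hiK => hs i hi (by omega)) E (E *ᵥ T)
    refine ⟨Function.update W (K + 1) (B * Eᵀ), Function.update c (K + 1) (d - B *ᵥ T),
      fun x hx => ?_⟩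
    have hpreact : preact n W c x K = E *ᵥ (C *ᵥ x + T) := by
      rw [← mlp, hWc x hx, mulVec_add, mulVec_mulVec]
    have hnonneg : 0 ≤ preact n W c x K :=
      hpreact ▸ padMatrix_mulVec_nonneg hsK fun i => ht x hx i
    rw [mlp_update_succ, act_succ_of_preact_nonneg hnonneg, hpreact, mulVec_mulVec,
      Matrix.mul_assoc, padMatrix_transpose_mul_self, Matrix.mul_one,
      mulVec_add, ← mulVec_mulVec]
    abel

/-- The family of `(K+1)`-layer ReLU MLPs with layer widths
`n 0, …, n (K+1)` has rank-`s` affine expression, where `s = min_{0 ≤ i ≤ K+1} n i`: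
every affine function `G(x) = A x + b` with `rank A = s` can be matched exactly
on any finite set `Ω` of inputs by some choice of MLP parameters. -/
theorem rank_s_affine_expression (n : ℕ → ℕ) (K : ℕ)
    (A : Matrix (Fin (n (K + 1))) (Fin (n 0)) ℝ) (bb : Fin (n (K + 1)) → ℝ)
    (hrank : A.rank = (Finset.range (K + 2)).inf' (by simp) n)
    (Ω : Finset (Fin (n 0) → ℝ)) :
    ∃ (W : ∀ i : ℕ, Matrix (Fin (n (i + 1))) (Fin (n i)) ℝ)
      (c : ∀ i : ℕ, Fin (n (i + 1)) → ℝ),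
      ∀ x ∈ Ω, mlp n W c K x = A.mulVec x + bb := by
  obtain ⟨B, C, rfl⟩ := A.exists_mul_eq_of_rank_eq hrank
  exact exists_mlp_eq_mul_mulVec_add_on n Ω K
    (fun i _ hiK => Finset.inf'_le n (Finset.mem_range.2 (by omega))) B C bb
end

section
/- Let L ≥ 1 and fix layer widths n_0 = m, n_1, …, n_L = n, and let s = min_{0 ≤ i ≤ L} n_i. For every affine function G(x) = A x + b with rank(A) = s and every finite subset Ω ⊂ ℝ^m, there exist a parameter vector φ and a constant c > 0 such that F_φ(x) = G(x) for all x ∈ Ω, and additionally every component of every preactivation of F_φ at every x ∈ Ω is greater than or equal to c (in particular, no ReLU ever maps an entry to zero on Ω). -/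
open Matrix

/-!
Factor `A = U * V` through `ℝ^s`, `s = rank A`; `s` is at most every width, so each hidden
layer can carry `z = V x` in its first `s` coordinates. Shifting every hidden unit by a
constant `t` larger than `1 + ‖V x‖` for all `x ∈ Ω` keeps all preactivations `≥ 1`, so the
ReLUs act as the identity on `Ω` and the network is the composite of its affine layers; the
next layer subtracts the shift again, and the last one applies `U` and adds `b`.
-/

theorem Matrix.exists_mul_eq_of_rank {m n R : Type*} [Fintype m] [Fintype n] [DecidableEq n]
    [Field R] (A : Matrix m n R) :
    ∃ (U : Matrix m (Fin A.rank) R) (V : Matrix (Fin A.rank) n R), U * V = A := by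
  let e : LinearMap.range A.mulVecLin ≃ₗ[R] (Fin A.rank → R) :=
    LinearEquiv.ofFinrankEq _ _ (Module.finrank_fin_fun R).symm
  refine ⟨LinearMap.toMatrix' ((LinearMap.range A.mulVecLin).subtype ∘ₗ e.symm.toLinearMap),
    LinearMap.toMatrix' (e.toLinearMap ∘ₗ A.mulVecLin.rangeRestrict), ?_⟩
  rw [← LinearMap.toMatrix'_comp]
  convert LinearMap.toMatrix'_toLin' A
  ext v
  simp

namespace Matrix

/-- A truncation rather than an inclusion when `a < s`. -/
def finInclusion (R : Type*) [Zero R] [One R] (a s : ℕ) : Matrix (Fin a) (Fin s) R :=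
  of fun i j => if (i : ℕ) = j then 1 else 0

variable {R : Type*} {a s : ℕ}

theorem finInclusion_mulVec [NonAssocSemiring R] (v : Fin s → R) (i : Fin a) :
    (finInclusion R a s *ᵥ v) i = if h : (i : ℕ) < s then v ⟨i, h⟩ else 0 := by
  simp only [mulVec, dotProduct, finInclusion, of_apply, ite_mul, one_mul, zero_mul]
  split_ifs with h
  · rw [Finset.sum_eq_single ⟨i, h⟩ (fun j _ hj => if_neg fun e => hj (Fin.ext e.symm))
      (by simp)]
    simp
  · exact Finset.sum_eq_zero fun j _ => if_neg fun (e : (i : ℕ) = j) => h (e ▸ j.2)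

theorem finInclusion_transpose_mul_self [NonAssocSemiring R] (h : s ≤ a) :
    (finInclusion R a s)ᵀ * finInclusion R a s = 1 := by
  ext i j
  rw [mul_apply, Finset.sum_eq_single ⟨i, i.2.trans_le h⟩]
  · simp [finInclusion, one_apply, Fin.ext_iff]
  · intro k _ hk
    simp [finInclusion, Fin.ext_iff] at hk ⊢
    omega
  · simp

theorem norm_finInclusion_mulVec_apply_le [SeminormedRing R] (v : Fin s → R) (i : Fin a) :
    ‖(finInclusion R a s *ᵥ v) i‖ ≤ ‖v‖ := by
  rw [finInclusion_mulVec]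
  split_ifs
  · exact norm_le_pi_norm v _
  · simp

theorem one_le_finInclusion_mulVec_apply_add {v : Fin s → ℝ} {t : ℝ} (ht : 1 + ‖v‖ ≤ t)
    (i : Fin a) : 1 ≤ (finInclusion ℝ a s *ᵥ v) i + t := by
  linarith [(abs_le.1 (norm_finInclusion_mulVec_apply_le v i)).1]

end Matrix

theorem act_succ_eq_preact {n : ℕ → ℕ} {A : ∀ i : ℕ, Matrix (Fin (n (i + 1))) (Fin (n i)) ℝ}
    {b : ∀ i : ℕ, Fin (n (i + 1)) → ℝ} {x : Fin (n 0) → ℝ} {k : ℕ}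
    (h : 0 ≤ preact n A b x k) : act n A b x (k + 1) = preact n A b x k :=
  funext fun j => max_eq_left (h j)

section Bottleneck

variable {n : ℕ → ℕ} {s : ℕ} (E : ∀ i : ℕ, Matrix (Fin (n (i + 1))) (Fin s) ℝ)
  (D : ∀ i : ℕ, Matrix (Fin s) (Fin (n i)) ℝ) (β : ∀ i : ℕ, Fin (n (i + 1)) → ℝ)
  (α : ∀ i : ℕ, Fin (n i) → ℝ) (x : Fin (n 0) → ℝ)

theorem preact_mul_sub_mulVec (k : ℕ) :
    preact n (fun i => E i * D i) (fun i => β i - (E i * D i) *ᵥ α i) x k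
      = E k *ᵥ (D k *ᵥ (act n (fun i => E i * D i) (fun i => β i - (E i * D i) *ᵥ α i) x k
        - α k)) + β k := by
  ext j
  simp only [preact, Pi.add_apply, Pi.sub_apply, mulVec_sub, mulVec_mulVec]
  ring

/-- `D (i + 1)` undoes `E i` and `α (i + 1)` undoes the offset `β i`, so `z = D 0 (x - α 0)`
passes through every layer unchanged while no ReLU is active. -/
theorem preact_mul_sub_mulVec_eq {K : ℕ} (hDE : ∀ i < K, D (i + 1) * E i = 1)
    (hα : ∀ i < K, α (i + 1) = β i)
    (hpos : ∀ i < K, 0 ≤ E i *ᵥ (D 0 *ᵥ (x - α 0)) + β i) {k : ℕ} (hk : k ≤ K) :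
    preact n (fun i => E i * D i) (fun i => β i - (E i * D i) *ᵥ α i) x k
      = E k *ᵥ (D 0 *ᵥ (x - α 0)) + β k := by
  set z := D 0 *ᵥ (x - α 0)
  set W := fun i => E i * D i
  set c := fun i => β i - (E i * D i) *ᵥ α i
  suffices key : ∀ k ≤ K, D k *ᵥ (act n W c x k - α k) = z by
    rw [preact_mul_sub_mulVec, key k hk]
  intro k hk
  induction k with
  | zero => rfl
  | succ k ih =>
    have hkK : k < K := by omega
    have hpre : preact n W c x k = E k *ᵥ z + β k := by
      rw [preact_mul_sub_mulVec, ih hkK.le]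
    rw [act_succ_eq_preact (hpre ▸ hpos k hkK), hpre, hα k hkK, add_sub_cancel_right,
      mulVec_mulVec, hDE k hkK, one_mulVec]

end Bottleneck

theorem exists_mlp_eq_mul_mulVec_add (n : ℕ → ℕ) (K s : ℕ)
    (U : Matrix (Fin (n (K + 1))) (Fin s) ℝ) (V : Matrix (Fin s) (Fin (n 0)) ℝ)
    (b : Fin (n (K + 1)) → ℝ) (hs : ∀ i, 0 < i → i ≤ K → s ≤ n i)
    (Ω : Finset (Fin (n 0) → ℝ)) :
    ∃ (W : ∀ i : ℕ, Matrix (Fin (n (i + 1))) (Fin (n i)) ℝ)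
      (c : ∀ i : ℕ, Fin (n (i + 1)) → ℝ),
      (∀ x ∈ Ω, mlp n W c K x = (U * V) *ᵥ x + b) ∧
      (∀ x ∈ Ω, ∀ k < K, ∀ j, 1 ≤ preact n W c x k j) := by
  set t := 1 + ∑ x ∈ Ω, ‖V *ᵥ x‖
  have ht : ∀ x ∈ Ω, 1 + ‖V *ᵥ x‖ ≤ t := fun x hx =>
    add_le_add_right (Finset.single_le_sum (fun y _ => norm_nonneg (V *ᵥ y)) hx) 1
  let E := Function.update (fun i => finInclusion ℝ (n (i + 1)) s) K U
  let D := Function.update (fun i => (finInclusion ℝ (n i) s)ᵀ) 0 V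
  let β := Function.update (fun i (_ : Fin (n (i + 1))) => t) K b
  let α := Function.update (fun i (_ : Fin (n i)) => t) 0 0
  have hE : ∀ i < K, E i = finInclusion ℝ (n (i + 1)) s := fun i hi =>
    Function.update_of_ne hi.ne _ _
  have hD : ∀ i, D (i + 1) = (finInclusion ℝ (n (i + 1)) s)ᵀ := fun i =>
    Function.update_of_ne i.succ_ne_zero _ _
  have hβ : ∀ i < K, β i = fun _ => t := fun i hi => Function.update_of_ne hi.ne _ _
  have hz : ∀ x, D 0 *ᵥ (x - α 0) = V *ᵥ x := by simp [D, α]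
  have hDE : ∀ i < K, D (i + 1) * E i = 1 := fun i hi => by
    rw [hD, hE i hi]
    exact finInclusion_transpose_mul_self (hs _ i.succ_pos hi)
  have hα : ∀ i < K, α (i + 1) = β i := fun i hi => by
    rw [hβ i hi]
    exact Function.update_of_ne i.succ_ne_zero _ _
  have hlow : ∀ x ∈ Ω, ∀ i < K, ∀ j, 1 ≤ (E i *ᵥ (V *ᵥ x) + β i) j := by
    intro x hx i hi j
    rw [hE i hi, hβ i hi]
    exact one_le_finInclusion_mulVec_apply_add (ht x hx) j
  have hpre : ∀ x ∈ Ω, ∀ k ≤ K, preact n (fun i => E i * D i)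
      (fun i => β i - (E i * D i) *ᵥ α i) x k = E k *ᵥ (V *ᵥ x) + β k := by
    intro x hx k hk
    have hpos : ∀ i < K, 0 ≤ E i *ᵥ (D 0 *ᵥ (x - α 0)) + β i := fun i hi j => by
      rw [hz]
      exact zero_le_one.trans (hlow x hx i hi j)
    rw [preact_mul_sub_mulVec_eq E D β α x hDE hα hpos hk, hz]
  refine ⟨fun i => E i * D i, fun i => β i - (E i * D i) *ᵥ α i, fun x hx => ?_, ?_⟩
  · rw [mlp, hpre x hx K le_rfl]
    simp [E, β, mulVec_mulVec]
  · intro x hx k hk j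
    rw [hpre x hx k hk.le]
    exact hlow x hx k hk j

/-- Rank-`s` affine expression with uniformly positive preactivations:
the matching parameters can be chosen so that additionally every component of every
preactivation (the inputs to the `K` ReLUs) at every `x ∈ Ω` is at least some `c > 0`. -/
theorem rank_s_affine_expression_pos_preact (n : ℕ → ℕ) (K : ℕ)
    (A : Matrix (Fin (n (K + 1))) (Fin (n 0)) ℝ) (bb : Fin (n (K + 1)) → ℝ)
    (hrank : A.rank = (Finset.range (K + 2)).inf' (by simp) n)
    (Ω : Finset (Fin (n 0) → ℝ)) :
    ∃ (W : ∀ i : ℕ, Matrix (Fin (n (i + 1))) (Fin (n i)) ℝ)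
      (c : ∀ i : ℕ, Fin (n (i + 1)) → ℝ) (c₀ : ℝ),
      0 < c₀ ∧
      (∀ x ∈ Ω, mlp n W c K x = A.mulVec x + bb) ∧
      (∀ x ∈ Ω, ∀ k < K, ∀ j, c₀ ≤ preact n W c x k j) := by
  obtain ⟨U, V, hUV⟩ := A.exists_mul_eq_of_rank
  have hs : ∀ i, 0 < i → i ≤ K → A.rank ≤ n i := fun i _ hi =>
    hrank ▸ Finset.inf'_le n (Finset.mem_range.2 (by omega))
  obtain ⟨W, c, hout, hpos⟩ := exists_mlp_eq_mul_mulVec_add n K A.rank U V bb hs Ω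
  exact ⟨W, c, 1, one_pos, hUV ▸ hout, hpos⟩
end

section
/- Consider a training set {(x_i, y_i)}_{i=1}^N with x_i ∈ ℝ^m, a family of L-layer ReLU MLPs F_φ : ℝ^m → ℝ^n with layer widths n_0 = m, n_1, …, n_L = n, and let s = min_{0 ≤ i ≤ L} n_i. Let ℓ : (ℝ^n)^N → ℝ be continuous, and define the affine training objective L_aff(A, b) = ℓ(A x_1 + b, …, A x_N + b) and the MLP training objective L_MLP(φ) = ℓ(F_φ(x_1), …, F_φ(x_N)). Suppose (A', b') with rank(A') ≤ s is a local minimum of L_aff subject to the constraint rank(A) ≤ s, i.e. there exists ε > 0 such that L_aff(A', b') ≤ L_aff(A, b) for all (A, b) with rank(A) ≤ s and ‖A − A'‖ + ‖b − b'‖ < ε. Then there exists a parameter vector φ' that is an (unconstrained) local minimum of L_MLP and satisfies F_{φ'}(x_i) = A' x_i + b' for all i = 1, …, N. -/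
/-!
Factor `A' = U V` through `ℝ^s`. The network whose first layer is `V` followed by the inclusion
of `ℝ^s` as the first `s` coordinates, whose hidden layers pass these coordinates on, and whose
last layer applies `U` computes `A' x_i + b'` once every hidden unit gets a bias `t` so large that
all ReLUs are active on the training inputs (the last bias compensates for these shifts). Activity
of the finitely many ReLUs on the finitely many inputs is an open condition on the parameters, so
near this network the MLP agrees on the training set with the affine map `x ↦ A_K ⋯ A_0 x + β`
obtained by deleting the ReLUs. Its matrix factors through every layer, so has rank `≤ s`, and
`(A_K ⋯ A_0, β)` depends continuously on the parameters; the constrained local minimality of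
`(A', b')` therefore gives the unconstrained local minimality of the network.
-/

open Matrix

/-- Euclidean distance between the parameter vectors `(A, b)` and `(A', b')` of a
`(K+1)`-layer MLP, i.e. the Euclidean norm of the concatenation of all entries of the
differences of the weight matrices and bias vectors of layers `1, …, K+1`. -/
noncomputable def paramDist (n : ℕ → ℕ) (K : ℕ)
    (A A' : ∀ i : ℕ, Matrix (Fin (n (i + 1))) (Fin (n i)) ℝ)
    (b b' : ∀ i : ℕ, Fin (n (i + 1)) → ℝ) : ℝ :=
  Real.sqrt (∑ i ∈ Finset.range (K + 1),
    ((∑ j, ∑ k, (A i j k - A' i j k) ^ 2) + ∑ j, (b i j - b' i j) ^ 2))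

/-- Frobenius (Euclidean) norm of a matrix. -/
noncomputable def matNorm {p q : ℕ} (M : Matrix (Fin p) (Fin q) ℝ) : ℝ :=
  Real.sqrt (∑ j, ∑ k, (M j k) ^ 2)

/-- Euclidean norm of a vector. -/
noncomputable def vecNorm {p : ℕ} (v : Fin p → ℝ) : ℝ :=
  Real.sqrt (∑ j, (v j) ^ 2)

open Filter Topology

abbrev MLPWeights (n : ℕ → ℕ) := ∀ i : ℕ, Matrix (Fin (n (i + 1))) (Fin (n i)) ℝ

abbrev MLPBiases (n : ℕ → ℕ) := ∀ i : ℕ, Fin (n (i + 1)) → ℝ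

section CoordEmb

def coordEmb (s p : ℕ) : Matrix (Fin p) (Fin s) ℝ :=
  Matrix.of fun j a => if (j : ℕ) = a then 1 else 0

variable {s p : ℕ}

theorem coordEmb_nonneg (j : Fin p) (a : Fin s) : 0 ≤ coordEmb s p j a := by
  simp only [coordEmb, of_apply]
  split_ifs <;> norm_num

theorem transpose_coordEmb_mul_coordEmb (h : s ≤ p) :
    (coordEmb s p)ᵀ * coordEmb s p = 1 := by
  ext a a'
  rw [mul_apply, Finset.sum_eq_single (⟨a, a.2.trans_le h⟩ : Fin p)]
  · simp [coordEmb, one_apply, Fin.ext_iff]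
  · intro j _ hj
    simp [coordEmb, Fin.ext_iff] at hj ⊢
    omega
  · simp

theorem coordEmb_mulVec_apply (v : Fin s → ℝ) (j : Fin p) :
    (coordEmb s p *ᵥ v) j = if h : (j : ℕ) < s then v ⟨j, h⟩ else 0 := by
  rw [mulVec, dotProduct]
  split_ifs with h
  · rw [Finset.sum_eq_single ⟨j, h⟩]
    · simp [coordEmb]
    · intro a _ ha
      simp [coordEmb, Fin.ext_iff] at ha ⊢
      omega
    · simp
  · refine Finset.sum_eq_zero fun a _ => ?_
    simp only [coordEmb, of_apply]
    rw [if_neg (by omega), zero_mul]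

theorem neg_lt_coordEmb_mulVec {t : ℝ} (ht : 0 < t) {v : Fin s → ℝ} (hv : ∀ a, -t < v a)
    (j : Fin p) : -t < (coordEmb s p *ᵥ v) j := by
  rw [coordEmb_mulVec_apply]
  split_ifs
  · exact hv _
  · linarith

theorem transpose_coordEmb_mulVec_nonneg {v : Fin p → ℝ} (hv : 0 ≤ v) :
    0 ≤ (coordEmb s p)ᵀ *ᵥ v := by
  intro a
  simp only [Pi.zero_apply, mulVec, dotProduct, transpose_apply]
  exact Finset.sum_nonneg fun j _ => mul_nonneg (coordEmb_nonneg j a) (hv j)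

end CoordEmb

theorem Matrix.exists_eq_mul_of_rank_le {p q s : ℕ} (A : Matrix (Fin p) (Fin q) ℝ)
    (h : A.rank ≤ s) :
    ∃ (U : Matrix (Fin p) (Fin s) ℝ) (V : Matrix (Fin s) (Fin q) ℝ), A = U * V := by
  set R := LinearMap.range A.mulVecLin
  have hR : Module.finrank ℝ R ≤ s := h
  let e := (Module.finBasis ℝ R).equivFun
  let J := coordEmb (Module.finrank ℝ R) s
  let f := toLin' J ∘ₗ (e : R →ₗ[ℝ] _) ∘ₗ A.mulVecLin.rangeRestrict
  let g := R.subtype ∘ₗ (e.symm : _ →ₗ[ℝ] R) ∘ₗ toLin' Jᵀ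
  have hgf : g ∘ₗ f = A.mulVecLin := by
    refine LinearMap.ext fun v => ?_
    simp [g, f, J, transpose_coordEmb_mul_coordEmb hR]
  refine ⟨LinearMap.toMatrix' g, LinearMap.toMatrix' f, ?_⟩
  rw [← LinearMap.toMatrix'_comp, hgf, ← toLin'_apply', LinearMap.toMatrix'_toLin']

section Collapse

def collapseWeight (n : ℕ → ℕ) (A : MLPWeights n) : (k : ℕ) → Matrix (Fin (n k)) (Fin (n 0)) ℝ
  | 0 => 1
  | k + 1 => A k * collapseWeight n A k

def collapseBias (n : ℕ → ℕ) (A : MLPWeights n) (b : MLPBiases n) : (k : ℕ) → Fin (n k) → ℝ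
  | 0 => 0
  | k + 1 => A k *ᵥ collapseBias n A b k + b k

def ReluActiveOn (n : ℕ → ℕ) (A : MLPWeights n) (b : MLPBiases n) (K : ℕ) {N : ℕ}
    (x : Fin N → Fin (n 0) → ℝ) : Prop :=
  ∀ i, ∀ k < K, ∀ j, 0 < preact n A b (x i) k j

variable {n : ℕ → ℕ} (A : MLPWeights n) (b : MLPBiases n) (x : Fin (n 0) → ℝ)

theorem preact_eq (k : ℕ) : preact n A b x k = A k *ᵥ act n A b x k + b k := rfl

theorem act_succ_nonneg (k : ℕ) : 0 ≤ act n A b x (k + 1) := fun _ => le_max_right _ _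

theorem act_succ_of_pos {k : ℕ} (h : ∀ j, 0 < preact n A b x k j) :
    act n A b x (k + 1) = preact n A b x k :=
  funext fun j => max_eq_left (h j).le

theorem preact_eq_collapse_of_act_eq {k : ℕ}
    (h : act n A b x k = collapseWeight n A k *ᵥ x + collapseBias n A b k) :
    preact n A b x k = collapseWeight n A (k + 1) *ᵥ x + collapseBias n A b (k + 1) := by
  rw [preact_eq, h, mulVec_add, mulVec_mulVec, add_assoc]
  rfl

theorem act_eq_collapse {k : ℕ} (h : ∀ k' < k, ∀ j, 0 < preact n A b x k' j) :
    act n A b x k = collapseWeight n A k *ᵥ x + collapseBias n A b k := by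
  induction k with
  | zero => simp [act, collapseWeight, collapseBias]
  | succ k ih =>
    rw [act_succ_of_pos A b x (h k k.lt_succ_self)]
    exact preact_eq_collapse_of_act_eq A b x (ih fun k' hk' => h k' (hk'.trans k.lt_succ_self))

theorem mlp_eq_collapse {K : ℕ} (h : ∀ k < K, ∀ j, 0 < preact n A b x k j) :
    mlp n A b K x = collapseWeight n A (K + 1) *ᵥ x + collapseBias n A b (K + 1) :=
  preact_eq_collapse_of_act_eq A b x (act_eq_collapse A b x h)

theorem rank_collapseWeight_le {k j : ℕ} (hj : j ≤ k) : (collapseWeight n A k).rank ≤ n j := by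
  induction k with
  | zero =>
    obtain rfl : j = 0 := Nat.le_zero.mp hj
    exact (rank_le_card_width _).trans_eq (Fintype.card_fin _)
  | succ k ih =>
    rcases hj.lt_or_eq with hj | rfl
    · exact (rank_mul_le_right _ _).trans (ih (Nat.lt_succ_iff.mp hj))
    · exact (rank_le_card_height _).trans_eq (Fintype.card_fin _)

theorem rank_collapseWeight_le_inf' (k : ℕ) :
    (collapseWeight n A k).rank ≤ (Finset.range (k + 1)).inf' (by simp) n :=
  Finset.le_inf' _ _ fun _ hj =>
    rank_collapseWeight_le A (Nat.lt_succ_iff.mp (Finset.mem_range.mp hj))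

end Collapse

theorem Filter.Tendsto.matrix_mulVec {α ι κ R : Type*} [Fintype κ] [TopologicalSpace R]
    [NonUnitalNonAssocSemiring R] [ContinuousAdd R] [ContinuousMul R] {l : Filter α}
    {M : α → Matrix ι κ R} {v : α → κ → R} {M₀ : Matrix ι κ R} {v₀ : κ → R}
    (hM : Tendsto M l (𝓝 M₀)) (hv : Tendsto v l (𝓝 v₀)) :
    Tendsto (fun a => M a *ᵥ v a) l (𝓝 (M₀ *ᵥ v₀)) :=
  ((continuous_fst.matrix_mulVec continuous_snd).tendsto (M₀, v₀)).comp (hM.prodMk_nhds hv)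

section Tendsto

variable {n : ℕ → ℕ} {α : Type*} {l : Filter α} {A : α → MLPWeights n} {b : α → MLPBiases n}
  {A₀ : MLPWeights n} {b₀ : MLPBiases n} {m : ℕ}

theorem tendsto_act (hA : ∀ i < m, Tendsto (fun a => A a i) l (𝓝 (A₀ i)))
    (hb : ∀ i < m, Tendsto (fun a => b a i) l (𝓝 (b₀ i))) (x : Fin (n 0) → ℝ) {k : ℕ}
    (hk : k ≤ m) : Tendsto (fun a => act n (A a) (b a) x k) l (𝓝 (act n A₀ b₀ x k)) := by
  induction k with
  | zero => exact tendsto_const_nhds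
  | succ k ih =>
    have hpre : Tendsto (fun a => preact n (A a) (b a) x k) l (𝓝 (preact n A₀ b₀ x k)) :=
      ((hA k hk).matrix_mulVec (ih (by omega))).add (hb k hk)
    exact tendsto_pi_nhds.2 fun j => (tendsto_pi_nhds.1 hpre j).max tendsto_const_nhds

theorem tendsto_preact (hA : ∀ i < m, Tendsto (fun a => A a i) l (𝓝 (A₀ i)))
    (hb : ∀ i < m, Tendsto (fun a => b a i) l (𝓝 (b₀ i))) (x : Fin (n 0) → ℝ) {k : ℕ}
    (hk : k < m) : Tendsto (fun a => preact n (A a) (b a) x k) l (𝓝 (preact n A₀ b₀ x k)) :=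
  ((hA k hk).matrix_mulVec (tendsto_act hA hb x hk.le)).add (hb k hk)

theorem tendsto_collapseWeight (hA : ∀ i < m, Tendsto (fun a => A a i) l (𝓝 (A₀ i))) {k : ℕ}
    (hk : k ≤ m) :
    Tendsto (fun a => collapseWeight n (A a) k) l (𝓝 (collapseWeight n A₀ k)) := by
  induction k with
  | zero => exact tendsto_const_nhds
  | succ k ih =>
    exact ((continuous_fst.matrix_mul continuous_snd).tendsto _).comp
      ((hA k hk).prodMk_nhds (ih (by omega)))

theorem tendsto_collapseBias (hA : ∀ i < m, Tendsto (fun a => A a i) l (𝓝 (A₀ i)))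
    (hb : ∀ i < m, Tendsto (fun a => b a i) l (𝓝 (b₀ i))) {k : ℕ} (hk : k ≤ m) :
    Tendsto (fun a => collapseBias n (A a) (b a) k) l (𝓝 (collapseBias n A₀ b₀ k)) := by
  induction k with
  | zero => exact tendsto_const_nhds
  | succ k ih => exact ((hA k hk).matrix_mulVec (ih (by omega))).add (hb k hk)

end Tendsto

theorem continuous_matNorm {p q : ℕ} : Continuous (matNorm : Matrix (Fin p) (Fin q) ℝ → ℝ) := by
  unfold matNorm
  fun_prop

theorem continuous_vecNorm {p : ℕ} : Continuous (vecNorm : (Fin p → ℝ) → ℝ) := by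
  unfold vecNorm
  fun_prop

section ParamDist

variable {n : ℕ → ℕ} {K : ℕ} {W W' : MLPWeights n} {c c' : MLPBiases n} {i : ℕ}

theorem layer_sq_le_sum_layers_sq (hi : i < K + 1) :
    (∑ j, ∑ l, (W i j l - W' i j l) ^ 2) + ∑ j, (c i j - c' i j) ^ 2 ≤
      ∑ i ∈ Finset.range (K + 1),
        ((∑ j, ∑ l, (W i j l - W' i j l) ^ 2) + ∑ j, (c i j - c' i j) ^ 2) :=
  Finset.single_le_sum
    (f := fun i => (∑ j, ∑ l, (W i j l - W' i j l) ^ 2) + ∑ j, (c i j - c' i j) ^ 2)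
    (fun _ _ => by positivity) (Finset.mem_range.2 hi)

theorem abs_sub_le_paramDist_weight (hi : i < K + 1) (j : Fin (n (i + 1))) (l : Fin (n i)) :
    |W i j l - W' i j l| ≤ paramDist n K W W' c c' := by
  refine Real.abs_le_sqrt ?_
  calc (W i j l - W' i j l) ^ 2 ≤ ∑ j, ∑ l, (W i j l - W' i j l) ^ 2 :=
        (Finset.single_le_sum (f := fun l => (W i j l - W' i j l) ^ 2)
          (fun _ _ => sq_nonneg _) (Finset.mem_univ l)).trans
          (Finset.single_le_sum (f := fun j => ∑ l, (W i j l - W' i j l) ^ 2)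
            (fun _ _ => by positivity) (Finset.mem_univ j))
    _ ≤ (∑ j, ∑ l, (W i j l - W' i j l) ^ 2) + ∑ j, (c i j - c' i j) ^ 2 :=
        le_add_of_nonneg_right (by positivity)
    _ ≤ _ := layer_sq_le_sum_layers_sq hi

theorem abs_sub_le_paramDist_bias (hi : i < K + 1) (j : Fin (n (i + 1))) :
    |c i j - c' i j| ≤ paramDist n K W W' c c' := by
  refine Real.abs_le_sqrt ?_
  calc (c i j - c' i j) ^ 2 ≤ ∑ j, (c i j - c' i j) ^ 2 :=
        Finset.single_le_sum (f := fun j => (c i j - c' i j) ^ 2)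
          (fun _ _ => sq_nonneg _) (Finset.mem_univ j)
    _ ≤ (∑ j, ∑ l, (W i j l - W' i j l) ^ 2) + ∑ j, (c i j - c' i j) ^ 2 :=
        le_add_of_nonneg_left (by positivity)
    _ ≤ _ := layer_sq_le_sum_layers_sq hi

variable (n K W c) in
noncomputable def paramNhds : Filter (MLPWeights n × MLPBiases n) :=
  comap (fun p => paramDist n K W p.1 c p.2) (𝓝 0)

variable (K W c) in
theorem tendsto_weight_paramNhds :
    ∀ i < K + 1, Tendsto (fun p : MLPWeights n × MLPBiases n => p.1 i) (paramNhds n K W c)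
      (𝓝 (W i)) := by
  intro i hi
  refine tendsto_pi_nhds.2 fun j => tendsto_pi_nhds.2 fun l => ?_
  refine tendsto_iff_dist_tendsto_zero.2 (squeeze_zero (fun _ => dist_nonneg) (fun p => ?_)
    tendsto_comap)
  rw [Real.dist_eq, abs_sub_comm]
  exact abs_sub_le_paramDist_weight hi j l

variable (K W c) in
theorem tendsto_bias_paramNhds :
    ∀ i < K + 1, Tendsto (fun p : MLPWeights n × MLPBiases n => p.2 i) (paramNhds n K W c)
      (𝓝 (c i)) := by
  intro i hi
  refine tendsto_pi_nhds.2 fun j => ?_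
  refine tendsto_iff_dist_tendsto_zero.2 (squeeze_zero (fun _ => dist_nonneg) (fun p => ?_)
    tendsto_comap)
  rw [Real.dist_eq, abs_sub_comm]
  exact abs_sub_le_paramDist_bias hi j

theorem exists_pos_of_eventually_paramNhds {P : MLPWeights n × MLPBiases n → Prop}
    (h : ∀ᶠ p in paramNhds n K W c, P p) :
    ∃ δ > 0, ∀ W' c', paramDist n K W W' c c' < δ → P (W', c') := by
  obtain ⟨δ, hδ, hball⟩ := (Metric.nhds_basis_ball.comap _).eventually_iff.1 h
  refine ⟨δ, hδ, fun W' c' hd => hball (x := (W', c')) ?_⟩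
  rw [Set.mem_preimage, Metric.mem_ball, Real.dist_eq, sub_zero]
  exact (abs_of_nonneg (Real.sqrt_nonneg _)).trans_lt hd

theorem eventually_reluActiveOn_paramNhds {N : ℕ} {x : Fin N → Fin (n 0) → ℝ}
    (h : ReluActiveOn n W c K x) :
    ∀ᶠ p in paramNhds n K W c, ReluActiveOn n p.1 p.2 K x := by
  have hpre : ∀ i, ∀ k ∈ Finset.range K, ∀ j,
      ∀ᶠ p in paramNhds n K W c, 0 < preact n p.1 p.2 (x i) k j := by
    intro i k hk j
    replace hk : k < K := Finset.mem_range.1 hk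
    have hlim := tendsto_pi_nhds.1 (tendsto_preact (tendsto_weight_paramNhds K W c)
      (tendsto_bias_paramNhds K W c) (x i) (Nat.lt_succ_of_lt hk)) j
    exact hlim.eventually (lt_mem_nhds (h i k hk j))
  filter_upwards [eventually_all.2 fun i => (eventually_all_finset _).2 fun k hk =>
    eventually_all.2 (hpre i k hk)] with p hp i k hk
  exact hp i k (Finset.mem_range.2 hk)

theorem eventually_collapse_close_paramNhds {ε : ℝ} (hε : 0 < ε) :
    ∀ᶠ p in paramNhds n K W c,
      matNorm (collapseWeight n p.1 (K + 1) - collapseWeight n W (K + 1)) +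
        vecNorm (collapseBias n p.1 p.2 (K + 1) - collapseBias n W c (K + 1)) < ε := by
  have hA := tendsto_weight_paramNhds K W c
  have hb := tendsto_bias_paramNhds K W c
  have hlim := ((continuous_matNorm.tendsto _).comp
      ((tendsto_collapseWeight hA le_rfl).sub_const (collapseWeight n W (K + 1)))).add
    ((continuous_vecNorm.tendsto _).comp
      ((tendsto_collapseBias hA hb le_rfl).sub_const (collapseBias n W c (K + 1))))
  refine hlim.eventually (gt_mem_nhds ?_)
  simpa [matNorm, vecNorm] using hε

end ParamDist

section Construction

variable {s : ℕ}

def liftRight (n : ℕ → ℕ) (V : Matrix (Fin s) (Fin (n 0)) ℝ) :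
    (k : ℕ) → Matrix (Fin s) (Fin (n k)) ℝ
  | 0 => V
  | k + 1 => (coordEmb s (n (k + 1)))ᵀ

/-- Layer 1 is `E V`, the hidden layers `E Eᵀ` pass the first `s` coordinates on, and the last
layer is `U Eᵀ` (`U V` when there are no hidden layers), where `E` is `coordEmb`. -/
def liftWeights (n : ℕ → ℕ) (K : ℕ) (U : Matrix (Fin (n (K + 1))) (Fin s) ℝ)
    (V : Matrix (Fin s) (Fin (n 0)) ℝ) : MLPWeights n := fun k =>
  Function.update (fun k => coordEmb s (n (k + 1))) K U k * liftRight n V k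

def liftBiases (n : ℕ → ℕ) (K : ℕ) (W : MLPWeights n) (b' : Fin (n (K + 1)) → ℝ) (t : ℝ) :
    MLPBiases n :=
  Function.update (fun _ _ => t) K (b' - W K *ᵥ collapseBias n W (fun _ _ => t) K)

variable {n : ℕ → ℕ} {K : ℕ} (U : Matrix (Fin (n (K + 1))) (Fin s) ℝ)
  (V : Matrix (Fin s) (Fin (n 0)) ℝ)

theorem liftWeights_of_ne {k : ℕ} (hk : k ≠ K) :
    liftWeights n K U V k = coordEmb s (n (k + 1)) * liftRight n V k := by
  rw [liftWeights, Function.update_of_ne hk]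

theorem liftRight_mul_collapseWeight (hs : ∀ i ≤ K, s ≤ n i) {k : ℕ} (hk : k ≤ K) :
    liftRight n V k * collapseWeight n (liftWeights n K U V) k = V := by
  induction k with
  | zero => exact Matrix.mul_one V
  | succ k ih =>
    rw [collapseWeight, liftWeights_of_ne U V (by omega), liftRight, Matrix.mul_assoc,
      ih (by omega), ← Matrix.mul_assoc,
      transpose_coordEmb_mul_coordEmb (hs _ hk), Matrix.one_mul]

theorem collapseWeight_liftWeights (hs : ∀ i ≤ K, s ≤ n i) :
    collapseWeight n (liftWeights n K U V) (K + 1) = U * V := by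
  rw [collapseWeight, liftWeights, Function.update_self, Matrix.mul_assoc,
    liftRight_mul_collapseWeight U V hs le_rfl]

theorem collapseBias_update {A : MLPWeights n} {b : MLPBiases n} {v : Fin (n (K + 1)) → ℝ}
    {k : ℕ} (hk : k ≤ K) : collapseBias n A (Function.update b K v) k = collapseBias n A b k := by
  induction k with
  | zero => rfl
  | succ k ih => rw [collapseBias, collapseBias, ih (by omega), Function.update_of_ne (by omega)]

theorem collapseBias_liftBiases (W : MLPWeights n) (b' : Fin (n (K + 1)) → ℝ) (t : ℝ) :
    collapseBias n W (liftBiases n K W b' t) (K + 1) = b' := by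
  rw [collapseBias, liftBiases, collapseBias_update le_rfl, Function.update_self,
    add_sub_cancel]

theorem reluActiveOn_lift {N : ℕ} {x : Fin N → Fin (n 0) → ℝ} (b' : Fin (n (K + 1)) → ℝ)
    {t : ℝ} (ht : 0 < t) (hV : ∀ i a, -t < (V *ᵥ x i) a) :
    ReluActiveOn n (liftWeights n K U V) (liftBiases n K (liftWeights n K U V) b' t) K x := by
  intro i k hk j
  have hb : liftBiases n K (liftWeights n K U V) b' t k = fun _ => t := by
    rw [liftBiases, Function.update_of_ne hk.ne]
  rw [preact_eq, Pi.add_apply, hb, liftWeights_of_ne U V hk.ne, ← mulVec_mulVec]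
  suffices ∀ a, -t < (liftRight n V k *ᵥ act n (liftWeights n K U V)
      (liftBiases n K (liftWeights n K U V) b' t) (x i) k) a by
    linarith [neg_lt_coordEmb_mulVec ht this j]
  cases k with
  | zero => exact hV i
  | succ k =>
    exact fun a => (neg_neg_of_pos ht).trans_le
      (transpose_coordEmb_mulVec_nonneg (act_succ_nonneg _ _ _ k) a)

end Construction

/-- If `(A', b')` is a local minimum of the affine training objective
`L_aff(A, b) = ℓ(A x_1 + b, …, A x_N + b)` subject to the rank constraint
`rank A ≤ s = min_{0 ≤ i ≤ K+1} n i`, then there are MLP parameters `(W, c)` that form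
an unconstrained local minimum of `L_MLP` and reproduce `A' x_i + b'` on the training set. -/
theorem affine_local_min_gives_mlp_local_min (n : ℕ → ℕ) (K N : ℕ)
    (x : Fin N → Fin (n 0) → ℝ)
    (ℓ : (Fin N → Fin (n (K + 1)) → ℝ) → ℝ)
    (A' : Matrix (Fin (n (K + 1))) (Fin (n 0)) ℝ) (b' : Fin (n (K + 1)) → ℝ)
    (hrank : A'.rank ≤ (Finset.range (K + 2)).inf' (by simp) n)
    (hmin : ∃ ε > 0, ∀ (A : Matrix (Fin (n (K + 1))) (Fin (n 0)) ℝ)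
        (b : Fin (n (K + 1)) → ℝ),
        A.rank ≤ (Finset.range (K + 2)).inf' (by simp) n →
        matNorm (A - A') + vecNorm (b - b') < ε →
        ℓ (fun i => A'.mulVec (x i) + b') ≤ ℓ (fun i => A.mulVec (x i) + b)) :
    ∃ (W : ∀ i : ℕ, Matrix (Fin (n (i + 1))) (Fin (n i)) ℝ)
      (c : ∀ i : ℕ, Fin (n (i + 1)) → ℝ),
      (∀ i, mlp n W c K (x i) = A'.mulVec (x i) + b') ∧
      ∃ δ > 0, ∀ (W' : ∀ i : ℕ, Matrix (Fin (n (i + 1))) (Fin (n i)) ℝ)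
        (c' : ∀ i : ℕ, Fin (n (i + 1)) → ℝ),
        paramDist n K W W' c c' < δ →
        ℓ (fun i => mlp n W c K (x i)) ≤ ℓ (fun i => mlp n W' c' K (x i)) := by
  obtain ⟨ε, hε, hmin⟩ := hmin
  obtain ⟨U, V, hUV⟩ := Matrix.exists_eq_mul_of_rank_le A' hrank
  have hs : ∀ i ≤ K, (Finset.range (K + 2)).inf' (by simp) n ≤ n i := fun i hi =>
    Finset.inf'_le n (Finset.mem_range.2 (by omega))
  obtain ⟨M, hM⟩ := Finite.exists_le fun p : Fin N × Fin _ => -(V *ᵥ x p.1) p.2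
  have hV : ∀ i a, -(max M 0 + 1) < (V *ᵥ x i) a := fun i a => by
    linarith [hM (i, a), le_max_left M 0]
  set W := liftWeights n K U V
  set c := liftBiases n K W b' (max M 0 + 1)
  have hact : ReluActiveOn n W c K x := reluActiveOn_lift U V b' (by positivity) hV
  have hW : collapseWeight n W (K + 1) = A' := by rw [collapseWeight_liftWeights U V hs, hUV]
  have hc : collapseBias n W c (K + 1) = b' := collapseBias_liftBiases W b' _
  have hfit : ∀ i, mlp n W c K (x i) = A' *ᵥ x i + b' := fun i => by
    rw [mlp_eq_collapse W c (x i) (hact i), hW, hc]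
  obtain ⟨δ, hδ, hnear⟩ := exists_pos_of_eventually_paramNhds
    ((eventually_reluActiveOn_paramNhds hact).and (eventually_collapse_close_paramNhds hε))
  refine ⟨W, c, hfit, δ, hδ, fun W' c' hd => ?_⟩
  obtain ⟨hact', hclose⟩ := hnear W' c' hd
  rw [hW, hc] at hclose
  simp only [hfit, mlp_eq_collapse W' c' (x _) (hact' _)]
  exact hmin _ _ (rank_collapseWeight_le_inf' W' (K + 1)) hclose
end

section
/- Let F_φ be an L-layer ReLU MLP with L ≥ 2, let {(x_i, y_i)}_{i=1}^N be a training set, let ℓ : (ℝ^n)^N → ℝ, and define L_MLP(φ) = ℓ(F_φ(x_1), …, F_φ(x_N)). If φ' = (A_1, b_1, …, A_L, b_L) is a local minimum of L_MLP, then for every c > 0 the rescaled parameter φ'_c = (c A_1, c b_1, c^{−1} A_2, b_2, A_3, b_3, …, A_L, b_L) is also a local minimum of L_MLP, with the same loss value L_MLP(φ'_c) = L_MLP(φ'). In particular, any local minimum of an MLP with at least one hidden layer gives rise to a one-parameter family of local minima. -/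
open Matrix

/-!
ReLU is positively homogeneous, so multiplying the first layer `(A₁, b₁)` by `c > 0` and
`A₂` by `c⁻¹` does not change the network function. This rescaling is a bijection of parameter
space whose inverse is the rescaling by `c⁻¹`, and both are Lipschitz with constant
`max c c⁻¹` for the parameter distance; hence the inverse maps a small ball around `φ'_c` into
a ball around `φ'` on which the loss is at least its value at `φ'`.
-/

section Rescale

variable {n : ℕ → ℕ}

noncomputable def rescaleWeights (c : ℝ) (A : ∀ i : ℕ, Matrix (Fin (n (i + 1))) (Fin (n i)) ℝ) :
    ∀ i : ℕ, Matrix (Fin (n (i + 1))) (Fin (n i)) ℝ :=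
  Function.update (Function.update A 0 (c • A 0)) 1 (c⁻¹ • A 1)

noncomputable def rescaleBiases (c : ℝ) (b : ∀ i : ℕ, Fin (n (i + 1)) → ℝ) :
    ∀ i : ℕ, Fin (n (i + 1)) → ℝ :=
  Function.update b 0 (c • b 0)

noncomputable def weightScale (c : ℝ) : ℕ → ℝ
  | 0 => c
  | 1 => c⁻¹
  | _ + 2 => 1

noncomputable def biasScale (c : ℝ) : ℕ → ℝ
  | 0 => c
  | _ + 1 => 1

lemma rescaleWeights_eq_smul (c : ℝ) (A : ∀ i : ℕ, Matrix (Fin (n (i + 1))) (Fin (n i)) ℝ) :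
    rescaleWeights c A = fun i => weightScale c i • A i := by
  funext i
  rcases i with _ | _ | i <;> simp [rescaleWeights, weightScale]

lemma rescaleBiases_eq_smul (c : ℝ) (b : ∀ i : ℕ, Fin (n (i + 1)) → ℝ) :
    rescaleBiases c b = fun i => biasScale c i • b i := by
  funext i
  rcases i with _ | i <;> simp [rescaleBiases, biasScale]

lemma rescaleWeights_inv_rescaleWeights {c : ℝ} (hc : c ≠ 0)
    (A : ∀ i : ℕ, Matrix (Fin (n (i + 1))) (Fin (n i)) ℝ) :
    rescaleWeights c⁻¹ (rescaleWeights c A) = A := by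
  funext i
  rcases i with _ | _ | i <;> simp [rescaleWeights_eq_smul, weightScale, smul_smul, hc]

lemma rescaleBiases_inv_rescaleBiases {c : ℝ} (hc : c ≠ 0) (b : ∀ i : ℕ, Fin (n (i + 1)) → ℝ) :
    rescaleBiases c⁻¹ (rescaleBiases c b) = b := by
  funext i
  rcases i with _ | i <;> simp [rescaleBiases_eq_smul, biasScale, smul_smul, hc]

lemma one_le_max_self_inv {c : ℝ} (hc : 0 < c) : 1 ≤ max c c⁻¹ := by
  rcases le_total 1 c with h | h
  · exact le_max_of_le_left h
  · exact le_max_of_le_right ((one_le_inv₀ hc).mpr h)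

lemma abs_weightScale_le {c : ℝ} (hc : 0 < c) (i : ℕ) : |weightScale c i| ≤ max c c⁻¹ := by
  rcases i with _ | _ | i
  · simp [weightScale, abs_of_pos hc]
  · simp [weightScale, abs_of_pos hc]
  · simpa [weightScale] using one_le_max_self_inv hc

lemma abs_biasScale_le {c : ℝ} (hc : 0 < c) (i : ℕ) : |biasScale c i| ≤ max c c⁻¹ := by
  rcases i with _ | i
  · simp [biasScale, abs_of_pos hc]
  · simpa [biasScale] using one_le_max_self_inv hc

lemma paramDist_smul_le {M : ℝ} {s t : ℕ → ℝ} (hs : ∀ i, |s i| ≤ M) (ht : ∀ i, |t i| ≤ M)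
    (K : ℕ) (A A' : ∀ i : ℕ, Matrix (Fin (n (i + 1))) (Fin (n i)) ℝ)
    (b b' : ∀ i : ℕ, Fin (n (i + 1)) → ℝ) :
    paramDist n K (fun i => s i • A i) (fun i => s i • A' i) (fun i => t i • b i)
      (fun i => t i • b' i) ≤ M * paramDist n K A A' b b' := by
  have hM : 0 ≤ M := (abs_nonneg _).trans (hs 0)
  have hsq {r : ℝ} (hr : |r| ≤ M) (u v : ℝ) : (r * u - r * v) ^ 2 ≤ M ^ 2 * (u - v) ^ 2 := by
    rw [← mul_sub, mul_pow, ← sq_abs r]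
    gcongr
  unfold paramDist
  rw [← Real.sqrt_sq hM, ← Real.sqrt_mul (sq_nonneg M)]
  simp only [Finset.mul_sum, mul_add, Matrix.smul_apply, Pi.smul_apply, smul_eq_mul]
  gcongr with i _ j _ k _ <;> apply hsq
  exacts [hs i, ht i]

lemma paramDist_rescale_le {c : ℝ} (hc : 0 < c) (K : ℕ)
    (A A' : ∀ i : ℕ, Matrix (Fin (n (i + 1))) (Fin (n i)) ℝ)
    (b b' : ∀ i : ℕ, Fin (n (i + 1)) → ℝ) :
    paramDist n K (rescaleWeights c A) (rescaleWeights c A') (rescaleBiases c b)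
      (rescaleBiases c b') ≤ max c c⁻¹ * paramDist n K A A' b b' := by
  simp only [rescaleWeights_eq_smul, rescaleBiases_eq_smul]
  exact paramDist_smul_le (abs_weightScale_le hc) (abs_biasScale_le hc) K A A' b b'

lemma act_one_rescale {c : ℝ} (hc : 0 ≤ c) (A : ∀ i : ℕ, Matrix (Fin (n (i + 1))) (Fin (n i)) ℝ)
    (b : ∀ i : ℕ, Fin (n (i + 1)) → ℝ) (x : Fin (n 0) → ℝ) :
    act n (rescaleWeights c A) (rescaleBiases c b) x 1 = c • act n A b x 1 := by
  funext j
  simp only [act, rescaleWeights, rescaleBiases, Function.update_of_ne zero_ne_one,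
    Function.update_self, Matrix.smul_mulVec, Pi.smul_apply, smul_eq_mul]
  rw [← mul_add, mul_max_of_nonneg _ _ hc, mul_zero]

lemma preact_succ_rescale {c : ℝ} (hc : 0 < c)
    (A : ∀ i : ℕ, Matrix (Fin (n (i + 1))) (Fin (n i)) ℝ) (b : ∀ i : ℕ, Fin (n (i + 1)) → ℝ)
    (x : Fin (n 0) → ℝ) (m : ℕ) :
    preact n (rescaleWeights c A) (rescaleBiases c b) x (m + 1) = preact n A b x (m + 1) := by
  induction m with
  | zero =>
    funext j
    show (rescaleWeights c A 1 *ᵥ act n (rescaleWeights c A) (rescaleBiases c b) x 1) j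
        + rescaleBiases c b 1 j = (A 1 *ᵥ act n A b x 1) j + b 1 j
    rw [act_one_rescale hc.le, rescaleWeights_eq_smul, rescaleBiases_eq_smul]
    simp only [weightScale, biasScale, Matrix.smul_mulVec, Matrix.mulVec_smul, smul_smul,
      mul_inv_cancel₀ hc.ne', one_smul]
  | succ m ih =>
    have hact : act n (rescaleWeights c A) (rescaleBiases c b) x (m + 2) = act n A b x (m + 2) := by
      funext j
      exact congrArg (max · 0) (congrFun ih j)
    funext j
    show (rescaleWeights c A (m + 2) *ᵥ act n (rescaleWeights c A) (rescaleBiases c b) x (m + 2)) j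
        + rescaleBiases c b (m + 2) j = (A (m + 2) *ᵥ act n A b x (m + 2)) j + b (m + 2) j
    rw [hact, rescaleWeights_eq_smul, rescaleBiases_eq_smul]
    simp only [weightScale, biasScale, one_smul]

lemma mlp_rescale {c : ℝ} (hc : 0 < c) {K : ℕ} (hK : 1 ≤ K)
    (A : ∀ i : ℕ, Matrix (Fin (n (i + 1))) (Fin (n i)) ℝ) (b : ∀ i : ℕ, Fin (n (i + 1)) → ℝ) :
    mlp n (rescaleWeights c A) (rescaleBiases c b) K = mlp n A b K := by
  obtain ⟨m, rfl⟩ : ∃ m, K = m + 1 := ⟨K - 1, by omega⟩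
  funext x
  exact preact_succ_rescale hc A b x m

end Rescale

/-- If `(A, b)` is a local minimum of the MLP training objective of a
network with at least one hidden layer (`L = K + 1 ≥ 2`), then for every `c > 0` the
rescaled parameter `(c A_1, c b_1, c⁻¹ A_2, b_2, A_3, b_3, …)` is also a local minimum,
with the same loss value. -/
theorem rescaled_local_min (n : ℕ → ℕ) (K : ℕ) (hK : 1 ≤ K) (N : ℕ)
    (x : Fin N → Fin (n 0) → ℝ)
    (ℓ : (Fin N → Fin (n (K + 1)) → ℝ) → ℝ)
    (A : ∀ i : ℕ, Matrix (Fin (n (i + 1))) (Fin (n i)) ℝ)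
    (b : ∀ i : ℕ, Fin (n (i + 1)) → ℝ)
    (hmin : ∃ δ > 0, ∀ (A' : ∀ i : ℕ, Matrix (Fin (n (i + 1))) (Fin (n i)) ℝ)
      (b' : ∀ i : ℕ, Fin (n (i + 1)) → ℝ),
      paramDist n K A A' b b' < δ →
      ℓ (fun i => mlp n A b K (x i)) ≤ ℓ (fun i => mlp n A' b' K (x i)))
    (c : ℝ) (hc : 0 < c) :
    (∃ δ > 0, ∀ (A' : ∀ i : ℕ, Matrix (Fin (n (i + 1))) (Fin (n i)) ℝ)
      (b' : ∀ i : ℕ, Fin (n (i + 1)) → ℝ),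
      paramDist n K (Function.update (Function.update A 0 (c • A 0)) 1 (c⁻¹ • A 1))
        A' (Function.update b 0 (c • b 0)) b' < δ →
      ℓ (fun i => mlp n (Function.update (Function.update A 0 (c • A 0)) 1 (c⁻¹ • A 1))
          (Function.update b 0 (c • b 0)) K (x i)) ≤
        ℓ (fun i => mlp n A' b' K (x i))) ∧
    ℓ (fun i => mlp n (Function.update (Function.update A 0 (c • A 0)) 1 (c⁻¹ • A 1))
        (Function.update b 0 (c • b 0)) K (x i)) =
      ℓ (fun i => mlp n A b K (x i)) := by
  obtain ⟨δ, hδ, hloc⟩ := hmin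
  have hM : 0 < max c c⁻¹ := lt_max_of_lt_left hc
  have hloss {s : ℝ} (hs : 0 < s) (A₀ : ∀ i : ℕ, Matrix (Fin (n (i + 1))) (Fin (n i)) ℝ)
      (b₀ : ∀ i : ℕ, Fin (n (i + 1)) → ℝ) :
      ℓ (fun i => mlp n (rescaleWeights s A₀) (rescaleBiases s b₀) K (x i)) =
        ℓ (fun i => mlp n A₀ b₀ K (x i)) := by
    rw [mlp_rescale hs hK]
  refine ⟨⟨δ / max c c⁻¹, div_pos hδ hM, fun A' b' hA' => ?_⟩, hloss hc A b⟩
  have hclose : paramDist n K A (rescaleWeights c⁻¹ A') b (rescaleBiases c⁻¹ b') < δ :=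
    calc paramDist n K A (rescaleWeights c⁻¹ A') b (rescaleBiases c⁻¹ b')
        = paramDist n K (rescaleWeights c⁻¹ (rescaleWeights c A)) (rescaleWeights c⁻¹ A')
            (rescaleBiases c⁻¹ (rescaleBiases c b)) (rescaleBiases c⁻¹ b') := by
          rw [rescaleWeights_inv_rescaleWeights hc.ne', rescaleBiases_inv_rescaleBiases hc.ne']
      _ ≤ max c c⁻¹ * paramDist n K (rescaleWeights c A) A' (rescaleBiases c b) b' := by
          simpa only [inv_inv, max_comm c⁻¹ c] using paramDist_rescale_le (inv_pos.mpr hc) K _ _ _ _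
      _ < max c c⁻¹ * (δ / max c c⁻¹) := mul_lt_mul_of_pos_left hA' hM
      _ = δ := mul_div_cancel₀ δ hM.ne'
  calc ℓ (fun i => mlp n (rescaleWeights c A) (rescaleBiases c b) K (x i))
      = ℓ (fun i => mlp n A b K (x i)) := hloss hc A b
    _ ≤ ℓ (fun i => mlp n (rescaleWeights c⁻¹ A') (rescaleBiases c⁻¹ b') K (x i)) :=
        hloc _ _ hclose
    _ = ℓ (fun i => mlp n A' b' K (x i)) := hloss (inv_pos.mpr hc) A' b'
end

section
/- Let F_φ be an L-layer ReLU MLP with L ≥ 2, layer widths n_0 = m, n_1, …, n_L = n, training inputs x_1, …, x_N ∈ ℝ^m, and continuous ℓ : (ℝ^n)^N → ℝ, with L_MLP(φ) = ℓ(F_φ(x_1), …, F_φ(x_N)). Suppose parameters φ' = (A_1, b_1, …, A_L, b_L) satisfy: (i) every component of A_1 x_i + b_1 is strictly negative for every i (all first-layer ReLUs are dead on the training set), and (ii) the tail parameter ψ' = (A_2, b_2, …, A_L, b_L) is a local minimum of the map ψ ↦ ℓ(T_ψ(0), …, T_ψ(0)), where T_ψ is the (L−1)-layer ReLU MLP with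 parameters ψ evaluated at the zero vector 0 ∈ ℝ^{n_1}. Then φ' is a local minimum of L_MLP. -/
/-!
Strict negativity of the first-layer preactivations on finitely many inputs is an open
condition on `(A₁, b₁)`, so every parameter close enough to `φ'` still has a dead first layer
on the training set. For such parameters each training output equals the tail network
evaluated at `0`, and the distance between the tails is at most the distance between the
full parameters; local minimality of the tail therefore transfers to `φ'`.
-/

open Matrix

open Filter Topology

section Perturbation

variable {ι μ κ : Type*} [Fintype κ]

theorem mulVec_add_apply_le_of_abs_sub_le (A A' : Matrix μ κ ℝ) (b b' : μ → ℝ)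
    (x : κ → ℝ) (j : μ) {ε : ℝ} (hA : ∀ k, |A' j k - A j k| ≤ ε)
    (hb : |b' j - b j| ≤ ε) :
    (A' *ᵥ x) j + b' j ≤ (A *ᵥ x) j + b j + ε * (∑ k, |x k| + 1) := by
  have hdiff : (A' *ᵥ x) j - (A *ᵥ x) j = ∑ k, (A' j k - A j k) * x k := by
    simp only [mulVec, dotProduct, ← Finset.sum_sub_distrib, sub_mul]
  have hsum : ∑ k, (A' j k - A j k) * x k ≤ ∑ k, ε * |x k| :=
    Finset.sum_le_sum fun k _ => calc
      (A' j k - A j k) * x k ≤ |A' j k - A j k| * |x k| :=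
        (le_abs_self _).trans (abs_mul _ _).le
      _ ≤ ε * |x k| := mul_le_mul_of_nonneg_right (hA k) (abs_nonneg _)
  rw [mul_add, mul_one, Finset.mul_sum]
  linarith [le_of_abs_le hb]

theorem eventually_forall_mulVec_add_neg [Finite ι] [Finite μ] (A : Matrix μ κ ℝ)
    (b : μ → ℝ) (x : ι → κ → ℝ) (h : ∀ i j, (A *ᵥ x i) j + b j < 0) :
    ∀ᶠ ε in 𝓝 (0 : ℝ), ∀ (A' : Matrix μ κ ℝ) (b' : μ → ℝ),
      (∀ j k, |A' j k - A j k| ≤ ε) → (∀ j, |b' j - b j| ≤ ε) →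
      ∀ i j, (A' *ᵥ x i) j + b' j < 0 := by
  have hbound : ∀ i j,
      ∀ᶠ ε in 𝓝 (0 : ℝ), (A *ᵥ x i) j + b j + ε * (∑ k, |x i k| + 1) < 0 :=
    fun i j => Tendsto.eventually_lt_const (h i j) <| by
      simpa using (continuous_const.add (continuous_id.mul continuous_const)).tendsto
        (f := fun ε : ℝ => (A *ᵥ x i) j + b j + ε * (∑ k, |x i k| + 1)) 0
  filter_upwards [eventually_all.2 fun i => eventually_all.2 (hbound i)]
    with ε hε A' b' hA hb i j
  exact (mulVec_add_apply_le_of_abs_sub_le A A' b b' (x i) j (hA j) (hb j)).trans_lt (hε i j)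

end Perturbation

section ReLUNetwork

variable {n : ℕ → ℕ}

theorem act_succ_eq_act_tail_zero (A : ∀ i : ℕ, Matrix (Fin (n (i + 1))) (Fin (n i)) ℝ)
    (b : ∀ i : ℕ, Fin (n (i + 1)) → ℝ) (x : Fin (n 0) → ℝ)
    (hdead : ∀ j, (A 0 *ᵥ x) j + b 0 j ≤ 0) (k : ℕ) :
    act n A b x (k + 1) =
      act (fun i => n (i + 1)) (fun i => A (i + 1)) (fun i => b (i + 1)) 0 k := by
  induction k with
  | zero =>
    funext j
    exact max_eq_right (hdead j)
  | succ k ih =>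
    funext j
    exact congrArg (fun v => max ((A (k + 1) *ᵥ v) j + b (k + 1) j) 0) ih

theorem mlp_succ_eq_mlp_tail_zero (K : ℕ)
    (A : ∀ i : ℕ, Matrix (Fin (n (i + 1))) (Fin (n i)) ℝ)
    (b : ∀ i : ℕ, Fin (n (i + 1)) → ℝ) (x : Fin (n 0) → ℝ)
    (hdead : ∀ j, (A 0 *ᵥ x) j + b 0 j ≤ 0) :
    mlp n A b (K + 1) x =
      mlp (fun i => n (i + 1)) (fun i => A (i + 1)) (fun i => b (i + 1)) K 0 := by
  unfold mlp preact
  rw [act_succ_eq_act_tail_zero A b x hdead]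

variable (K : ℕ) (A A' : ∀ i : ℕ, Matrix (Fin (n (i + 1))) (Fin (n i)) ℝ)
  (b b' : ∀ i : ℕ, Fin (n (i + 1)) → ℝ)

theorem paramDist_nonneg : 0 ≤ paramDist n K A A' b b' := Real.sqrt_nonneg _

theorem layer_sq_le_paramDist_sq {i : ℕ} (hi : i ≤ K) :
    (∑ j, ∑ k, (A i j k - A' i j k) ^ 2) + ∑ j, (b i j - b' i j) ^ 2 ≤
      ∑ i ∈ Finset.range (K + 1),
        ((∑ j, ∑ k, (A i j k - A' i j k) ^ 2) + ∑ j, (b i j - b' i j) ^ 2) :=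
  Finset.single_le_sum (f := fun i => (∑ j, ∑ k, (A i j k - A' i j k) ^ 2) +
      ∑ j, (b i j - b' i j) ^ 2)
    (fun _ _ => by positivity) (Finset.mem_range_succ_iff.2 hi)

theorem abs_weight_sub_le_paramDist {i : ℕ} (hi : i ≤ K) (j : Fin (n (i + 1)))
    (k : Fin (n i)) :
    |A' i j k - A i j k| ≤ paramDist n K A A' b b' := by
  rw [abs_sub_comm]
  refine Real.abs_le_sqrt (le_trans ?_ (layer_sq_le_paramDist_sq K A A' b b' hi))
  calc (A i j k - A' i j k) ^ 2 ≤ ∑ k, (A i j k - A' i j k) ^ 2 :=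
        Finset.single_le_sum (f := fun k => (A i j k - A' i j k) ^ 2)
          (fun _ _ => sq_nonneg _) (Finset.mem_univ k)
    _ ≤ ∑ j, ∑ k, (A i j k - A' i j k) ^ 2 :=
        Finset.single_le_sum (f := fun j => ∑ k, (A i j k - A' i j k) ^ 2)
          (fun _ _ => by positivity) (Finset.mem_univ j)
    _ ≤ _ := le_add_of_nonneg_right (by positivity)

theorem abs_bias_sub_le_paramDist {i : ℕ} (hi : i ≤ K) (j : Fin (n (i + 1))) :
    |b' i j - b i j| ≤ paramDist n K A A' b b' := by
  rw [abs_sub_comm]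
  refine Real.abs_le_sqrt (le_trans ?_ (layer_sq_le_paramDist_sq K A A' b b' hi))
  calc (b i j - b' i j) ^ 2 ≤ ∑ j, (b i j - b' i j) ^ 2 :=
        Finset.single_le_sum (f := fun j => (b i j - b' i j) ^ 2)
          (fun _ _ => sq_nonneg _) (Finset.mem_univ j)
    _ ≤ _ := le_add_of_nonneg_left (by positivity)

theorem paramDist_tail_le :
    paramDist (fun i => n (i + 1)) K (fun i => A (i + 1)) (fun i => A' (i + 1))
        (fun i => b (i + 1)) (fun i => b' (i + 1)) ≤ paramDist n (K + 1) A A' b b' := by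
  refine Real.sqrt_le_sqrt ?_
  rw [Finset.sum_range_succ' _ (K + 1)]
  exact le_add_of_nonneg_right (by positivity)

end ReLUNetwork

/-- Dead first layer gives local minima: for an `L = K' + 2`-layer MLP,
if (i) all first-layer preactivations `A_1 x_i + b_1` are strictly negative on the training
inputs (all first-layer ReLUs are dead), and (ii) the tail parameters
`(A_2, b_2, …, A_L, b_L)` form a local minimum of `ψ ↦ ℓ(T_ψ(0), …, T_ψ(0))` where `T_ψ`
is the `(L-1)`-layer MLP with parameters `ψ` evaluated at `0 ∈ ℝ^{n 1}`, then the whole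
parameter vector is a local minimum of the MLP training objective. -/
theorem dead_relu_local_min (n : ℕ → ℕ) (K' N : ℕ)
    (x : Fin N → Fin (n 0) → ℝ)
    (ℓ : (Fin N → Fin (n (K' + 2)) → ℝ) → ℝ)
    (A : ∀ i : ℕ, Matrix (Fin (n (i + 1))) (Fin (n i)) ℝ)
    (b : ∀ i : ℕ, Fin (n (i + 1)) → ℝ)
    (hdead : ∀ i : Fin N, ∀ j, (A 0).mulVec (x i) j + b 0 j < 0)
    (htail : ∃ δ > 0,
      ∀ (B : ∀ i : ℕ, Matrix (Fin (n (i + 2))) (Fin (n (i + 1))) ℝ)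
        (c : ∀ i : ℕ, Fin (n (i + 2)) → ℝ),
        paramDist (fun i => n (i + 1)) K' (fun i => A (i + 1)) B (fun i => b (i + 1)) c < δ →
        ℓ (fun _ => mlp (fun i => n (i + 1)) (fun i => A (i + 1)) (fun i => b (i + 1)) K' 0) ≤
          ℓ (fun _ => mlp (fun i => n (i + 1)) B c K' 0)) :
    ∃ δ > 0, ∀ (A' : ∀ i : ℕ, Matrix (Fin (n (i + 1))) (Fin (n i)) ℝ)
      (b' : ∀ i : ℕ, Fin (n (i + 1)) → ℝ),
      paramDist n (K' + 1) A A' b b' < δ →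
      ℓ (fun i => mlp n A b (K' + 1) (x i)) ≤ ℓ (fun i => mlp n A' b' (K' + 1) (x i)) := by
  obtain ⟨δ₁, hδ₁, htail⟩ := htail
  obtain ⟨δ, hδ, hsmall⟩ := Metric.eventually_nhds_iff.1
    ((eventually_lt_nhds hδ₁).and (eventually_forall_mulVec_add_neg (A 0) (b 0) x hdead))
  refine ⟨δ, hδ, fun A' b' hd => ?_⟩
  obtain ⟨hd₁, hstill_dead⟩ := hsmall (y := paramDist n (K' + 1) A A' b b') <| by
    rwa [Real.dist_0_eq_abs, abs_of_nonneg (paramDist_nonneg _ A A' b b')]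
  have hdead' := hstill_dead (A' 0) (b' 0)
    (abs_weight_sub_le_paramDist _ A A' b b' (Nat.zero_le _))
    (abs_bias_sub_le_paramDist _ A A' b b' (Nat.zero_le _))
  have hout : ∀ (A' : ∀ i : ℕ, Matrix (Fin (n (i + 1))) (Fin (n i)) ℝ)
      (b' : ∀ i : ℕ, Fin (n (i + 1)) → ℝ),
      (∀ i j, (A' 0 *ᵥ x i) j + b' 0 j < 0) →
      (fun i => mlp n A' b' (K' + 1) (x i)) =
        fun _ => mlp (fun i => n (i + 1)) (fun i => A' (i + 1)) (fun i => b' (i + 1)) K' 0 :=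
    fun A' b' h => funext fun i => mlp_succ_eq_mlp_tail_zero K' A' b' (x i) fun j => (h i j).le
  rw [hout A b hdead, hout A' b' hdead']
  exact htail _ _ ((paramDist_tail_le K' A A' b b').trans_lt hd₁)
end
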